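/- Assume T is disk-like. Let ℓ ∈ ℤ² \ {0} with T ∩ (T + ℓ) ≠ ∅, and let B_ℓ = {ℓ'' ∈ ℤ² \ {0} : T ∩ (T + ℓ'') ≠ ∅ and ℓ'' = Aℓ − bv for some b ∈ ΔD}. Then T_ℓ = ⋃_{ℓ'' ∈ B_ℓ} ⋃_{j ∈ I_b} A^{−1}(T_{ℓ''} + jv), where for each ℓ'' ∈ B_ℓ the integer b ∈ ΔD is the (unique) one with ℓ'' = Aℓ − bv, T_m = T ∩ (T + m), and I_b = {b, b+1, …, |q|−1} if b ≥ 0 and I_b = {0, 1, …, |q|−1+b} if b < 0. Hence the boundary ∂T = ⋃_{ℓ} T_ℓ is a graph-directed set. -/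

import Mathlib

noncomputable section

open Matrix Topology Set Pointwise Polynomial

/-- The plane `ℝ²` with the Euclidean metric. -/
abbrev E2 : Type := EuclideanSpace ℝ (Fin 2)

/-- View a plain vector `Fin 2 → ℝ` as a point of the Euclidean plane. -/
def toE (x : Fin 2 → ℝ) : E2 := WithLp.toLp 2 x

/-- The real matrix obtained from an integer matrix. -/
def matR (A : Matrix (Fin 2) (Fin 2) ℤ) : Matrix (Fin 2) (Fin 2) ℝ := A.map Int.cast

/-- View an integer vector as a point of the Euclidean plane. -/
def vecE (w : Fin 2 → ℤ) : E2 := toE fun i => (w i : ℝ)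

/-- All complex eigenvalues of `A` have modulus greater than 1. -/
def Expanding (A : Matrix (Fin 2) (Fin 2) ℤ) : Prop :=
  ∀ z : ℂ, ((A.charpoly).map (Int.castRingHom ℂ)).IsRoot z → 1 < ‖z‖

/-- `a` is a digit in `D = {0, 1, …, |q|-1}`. -/
def IsDigit (q a : ℤ) : Prop := 0 ≤ a ∧ a < |q|

/-- `b` belongs to the difference digit set `ΔD = D - D = {-(|q|-1), …, |q|-1}`. -/
def IsDiffDigit (q b : ℤ) : Prop := |b| ≤ |q| - 1

/-- `x = ∑_{i≥1} A^{-i} (c_{i-1} v)` (note the `0`-based indexing of `c`). -/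
def SumsTo (A : Matrix (Fin 2) (Fin 2) ℤ) (v : Fin 2 → ℤ) (c : ℕ → ℤ) (x : E2) : Prop :=
  HasSum (fun i : ℕ => toE (((matR A)⁻¹ ^ (i + 1)).mulVec ((c i : ℝ) • fun j => (v j : ℝ)))) x

/-- The self-affine tile `T = T(A, Dv)` with the consecutive collinear digit set `Dv`. -/
def Tile (A : Matrix (Fin 2) (Fin 2) ℤ) (q : ℤ) (v : Fin 2 → ℤ) : Set E2 :=
  {x | ∃ a : ℕ → ℤ, (∀ i, IsDigit q (a i)) ∧ SumsTo A v a x}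

/-- `T` is homeomorphic to the closed unit disk in `ℝ²`. -/
def DiskLike (T : Set E2) : Prop :=
  Nonempty (T ≃ₜ (Metric.closedBall (0 : E2) 1 : Set E2))

/-- `{v, Av}` is a `ℤ`-basis of `ℤ²` (primitivity of the digit set). -/
def IsZBasis (A : Matrix (Fin 2) (Fin 2) ℤ) (v : Fin 2 → ℤ) : Prop :=
  Submodule.span ℤ ({v, A.mulVec v} : Set (Fin 2 → ℤ)) = ⊤ ∧
    LinearIndependent ℤ ![v, A.mulVec v]

/-- `j ∈ I_b`, where `I_b = {b, …, |q|-1}` if `b ≥ 0` and `I_b = {0, …, |q|-1+b}` if `b < 0`. -/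
def MemI (q b j : ℤ) : Prop :=
  (0 ≤ b ∧ b ≤ j ∧ j ≤ |q| - 1) ∨ (b < 0 ∧ 0 ≤ j ∧ j ≤ |q| - 1 + b)

/-! The set equation `A T = ⋃_{d ∈ D} (T + d v)` describes both sides. Peeling the first digits
`d, d'` off expansions of `x` and `x - ℓ` shows `A x - d v ∈ T ∩ (T + A ℓ - (d - d') v)`;
conversely, prepending the digits `j` and `j - b` to a point of `T ∩ (T + A ℓ - b v)` gives a point
of `T ∩ (T + ℓ)`, and `j ∈ I_b` says exactly that both are digits. The translate `A ℓ - b v` is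
nonzero since, by Cayley–Hamilton, `A ℓ = b v` in the basis `{v, A v}` forces `q ∣ b`. -/

section CharPoly

variable {n R : Type*} [Fintype n] [DecidableEq n] [CommRing R]

lemma Matrix.mulVec_mulVec_add_eq_zero_of_charpoly_eq {A : Matrix n n R} {p q : R}
    (hchar : A.charpoly = X ^ 2 + C p * X + C q) (w : n → R) :
    A *ᵥ (A *ᵥ w) + p • A *ᵥ w + q • w = 0 := by
  have h := Matrix.aeval_self_charpoly A
  rw [hchar] at h
  have hmat : A * A + p • A + q • (1 : Matrix n n R) = 0 := by
    simpa [Algebra.algebraMap_eq_smul_one, sq] using h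
  simpa [Matrix.add_mulVec, Matrix.smul_mulVec, Matrix.mulVec_mulVec] using
    congrArg (· *ᵥ w) hmat

lemma Matrix.det_eq_of_charpoly_eq_of_card_two (hn : Fintype.card n = 2) {A : Matrix n n R}
    {p q : R} (hchar : A.charpoly = X ^ 2 + C p * X + C q) : A.det = q := by
  rw [Matrix.det_eq_sign_charpoly_coeff, hn, hchar]
  simp [coeff_X_pow]

end CharPoly

lemma mulVec_ne_smul_of_isZBasis {A : Matrix (Fin 2) (Fin 2) ℤ} {p q : ℤ} {v : Fin 2 → ℤ}
    (hchar : A.charpoly = X ^ 2 + C p * X + C q) (hq : q ≠ 0) (hbasis : IsZBasis A v)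
    {ℓ : Fin 2 → ℤ} (hℓ : ℓ ≠ 0) {b : ℤ} (hb : |b| < |q|) : A *ᵥ ℓ ≠ b • v := by
  intro hAℓ
  obtain ⟨s, t, rfl⟩ : ∃ s t : ℤ, s • v + t • A *ᵥ v = ℓ :=
    Submodule.mem_span_pair.1 (hbasis.1 ▸ Submodule.mem_top)
  -- Cayley–Hamilton applied to `ℓ = s v + t A v` gives `(p b + q s) v + (b + q t) A v = 0`.
  have hcoord : (p * b + q * s) • v + (b + q * t) • A *ᵥ v = 0 := by
    rw [← Matrix.mulVec_mulVec_add_eq_zero_of_charpoly_eq hchar (s • v + t • A *ᵥ v), hAℓ,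
      Matrix.mulVec_smul]
    module
  obtain ⟨hs, ht⟩ := LinearIndependent.pair_iff.1 hbasis.2 _ _ hcoord
  have hb0 : b = 0 :=
    Int.eq_zero_of_abs_lt_dvd ((abs_dvd q b).2 ⟨-t, by linarith⟩) hb
  subst hb0
  obtain rfl : s = 0 := (mul_eq_zero.1 (by linarith : q * s = 0)).resolve_left hq
  obtain rfl : t = 0 := (mul_eq_zero.1 (by linarith : q * t = 0)).resolve_left hq
  simp at hℓ

section Euclidean

variable {n : Type*} [Fintype n] [DecidableEq n] {M : Matrix n n ℝ}

lemma Matrix.toEuclideanCLM_inv_apply_apply (hM : IsUnit M.det) (x : EuclideanSpace ℝ n) :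
    toEuclideanCLM (𝕜 := ℝ) M⁻¹ (toEuclideanCLM (𝕜 := ℝ) M x) = x := by
  rw [← mul_apply_eq_comp, ← map_mul, Matrix.nonsing_inv_mul M hM, map_one,
    one_apply_eq_self]

lemma Matrix.toEuclideanCLM_apply_inv_apply (hM : IsUnit M.det) (x : EuclideanSpace ℝ n) :
    toEuclideanCLM (𝕜 := ℝ) M (toEuclideanCLM (𝕜 := ℝ) M⁻¹ x) = x := by
  rw [← mul_apply_eq_comp, ← map_mul, Matrix.mul_nonsing_inv M hM, map_one,
    one_apply_eq_self]

def Matrix.toEuclideanCLE (hM : IsUnit M.det) : EuclideanSpace ℝ n ≃L[ℝ] EuclideanSpace ℝ n :=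
  .equivOfInverse (toEuclideanCLM (𝕜 := ℝ) M) (toEuclideanCLM (𝕜 := ℝ) M⁻¹)
    (Matrix.toEuclideanCLM_inv_apply_apply hM) (Matrix.toEuclideanCLM_apply_inv_apply hM)

end Euclidean

lemma mem_image_inv_mulVec_iff {M : Matrix (Fin 2) (Fin 2) ℝ} (hM : IsUnit M.det) {S : Set E2}
    {x : E2} :
    x ∈ (fun y : E2 => toE (M⁻¹.mulVec y)) '' S ↔ toEuclideanCLM (𝕜 := ℝ) M x ∈ S := by
  change x ∈ (Matrix.toEuclideanCLE hM).symm '' S ↔ _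
  rw [ContinuousLinearEquiv.image_symm_eq_preimage]
  rfl

lemma IsDigit.isDiffDigit_sub {q d d' : ℤ} (hd : IsDigit q d) (hd' : IsDigit q d') :
    IsDiffDigit q (d - d') := by
  unfold IsDigit at hd hd'
  unfold IsDiffDigit
  rw [abs_le]
  omega

lemma IsDigit.memI_sub {q d d' : ℤ} (hd : IsDigit q d) (hd' : IsDigit q d') :
    MemI q (d - d') d := by
  unfold IsDigit at hd hd'
  unfold MemI
  omega

lemma MemI.isDigit {q b j : ℤ} (hj : MemI q b j) : IsDigit q j := by
  unfold MemI at hj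
  unfold IsDigit
  omega

lemma MemI.isDigit_sub {q b j : ℤ} (hj : MemI q b j) : IsDigit q (j - b) := by
  unfold MemI at hj
  unfold IsDigit
  omega

section Tile

variable {A : Matrix (Fin 2) (Fin 2) ℤ} {q : ℤ} {v : Fin 2 → ℤ}

lemma isUnit_det_matR {p : ℤ} (hchar : A.charpoly = X ^ 2 + C p * X + C q) (hq : q ≠ 0) :
    IsUnit (matR A).det := by
  rw [show matR A = (Int.castRingHom ℝ).mapMatrix A from rfl, ← RingHom.map_det,
    Matrix.det_eq_of_charpoly_eq_of_card_two (Fintype.card_fin 2) hchar]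
  exact isUnit_iff_ne_zero.2 (by simpa using hq)

lemma vecE_mulVec (w : Fin 2 → ℤ) :
    vecE (A *ᵥ w) = toEuclideanCLM (𝕜 := ℝ) (matR A) (vecE w) := by
  ext i
  exact RingHom.map_mulVec (Int.castRingHom ℝ) A w i

lemma vecE_sub (w u : Fin 2 → ℤ) : vecE (w - u) = vecE w - vecE u := by
  ext i
  simp [vecE, toE]

lemma vecE_zsmul (b : ℤ) (w : Fin 2 → ℤ) : vecE (b • w) = (b : ℝ) • vecE w := by
  ext i
  simp [vecE, toE]

lemma sumsTo_iff_sumsTo_tail (hA : IsUnit (matR A).det) (c : ℕ → ℤ) (x : E2) :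
    SumsTo A v c x ↔
      SumsTo A v (fun i => c (i + 1))
        (toEuclideanCLM (𝕜 := ℝ) (matR A) x - (c 0 : ℝ) • vecE v) := by
  set e := Matrix.toEuclideanCLE hA
  set g : ℕ → E2 := fun i => toE (((matR A)⁻¹ ^ i) *ᵥ ((c i : ℝ) • fun j => (v j : ℝ)))
  have hterm (i : ℕ) :
      e (toE (((matR A)⁻¹ ^ (i + 1)) *ᵥ ((c i : ℝ) • fun j => (v j : ℝ)))) = g i := by
    change toE (matR A *ᵥ ((matR A)⁻¹ ^ (i + 1) *ᵥ _)) = _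
    rw [Matrix.mulVec_mulVec, pow_succ', ← mul_assoc, Matrix.mul_nonsing_inv _ hA, one_mul]
  have hg0 : g 0 = (c 0 : ℝ) • vecE v := by
    simp only [g, pow_zero, Matrix.one_mulVec]
    rfl
  unfold SumsTo
  rw [← e.hasSum', funext hterm, ← hasSum_nat_add_iff' 1, Finset.sum_range_one, hg0]
  rfl

lemma mem_tile_iff (hA : IsUnit (matR A).det) {x : E2} :
    x ∈ Tile A q v ↔
      ∃ d, IsDigit q d ∧ toEuclideanCLM (𝕜 := ℝ) (matR A) x ∈ (d : ℝ) • vecE v +ᵥ Tile A q v := by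
  simp only [mem_vadd_set_iff_neg_vadd_mem, vadd_eq_add, neg_add_eq_sub]
  constructor
  · rintro ⟨c, hc, hx⟩
    exact ⟨c 0, hc 0, fun i => c (i + 1), fun i => hc (i + 1), (sumsTo_iff_sumsTo_tail hA c x).1 hx⟩
  · rintro ⟨d, hd, c, hc, hsum⟩
    refine ⟨fun | 0 => d | i + 1 => c i, fun | 0 => hd | i + 1 => hc i, ?_⟩
    exact (sumsTo_iff_sumsTo_tail hA _ x).2 hsum

lemma mem_vadd_tile_iff (hA : IsUnit (matR A).det) {w x : E2} :
    x ∈ w +ᵥ Tile A q v ↔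
      ∃ d, IsDigit q d ∧ toEuclideanCLM (𝕜 := ℝ) (matR A) x ∈
        (toEuclideanCLM (𝕜 := ℝ) (matR A) w + (d : ℝ) • vecE v) +ᵥ Tile A q v := by
  rw [mem_vadd_set_iff_neg_vadd_mem, vadd_eq_add, mem_tile_iff hA]
  refine exists_congr fun d => and_congr_right' ?_
  rw [← vadd_vadd, mem_vadd_set_iff_neg_vadd_mem (a := toEuclideanCLM (𝕜 := ℝ) (matR A) w),
    vadd_eq_add, map_add, map_neg]

end Tile

theorem piece_decomposition_general
    (A : Matrix (Fin 2) (Fin 2) ℤ) (p q : ℤ) (v : Fin 2 → ℤ)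
    (hq : 2 ≤ |q|)
    (hchar : A.charpoly = X ^ 2 + C p * X + C q)
    (hbasis : IsZBasis A v)
    (ℓ : Fin 2 → ℤ) (hℓ : ℓ ≠ 0) :
    Tile A q v ∩ (vecE ℓ +ᵥ Tile A q v) =
      ⋃ (ℓ'' : Fin 2 → ℤ) (_ : ℓ'' ≠ 0)
        (_ : (Tile A q v ∩ (vecE ℓ'' +ᵥ Tile A q v)).Nonempty)
        (b : ℤ) (_ : IsDiffDigit q b) (_ : ℓ'' = A.mulVec ℓ - b • v)
        (j : ℤ) (_ : MemI q b j),
        (fun x : E2 => toE ((matR A)⁻¹.mulVec x)) ''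
          (((j : ℝ) • vecE v) +ᵥ (Tile A q v ∩ (vecE ℓ'' +ᵥ Tile A q v))) := by
  have hq0 : q ≠ 0 := by rintro rfl; simp at hq
  have hA := isUnit_det_matR hchar hq0
  set T := Tile A q v
  have key (b j : ℤ) : (j : ℝ) • vecE v + vecE (A *ᵥ ℓ - b • v) =
      toEuclideanCLM (𝕜 := ℝ) (matR A) (vecE ℓ) + ((j - b : ℤ) : ℝ) • vecE v := by
    rw [vecE_sub, vecE_mulVec, vecE_zsmul]
    push_cast
    module
  ext x
  simp only [mem_iUnion, exists_prop, mem_image_inv_mulVec_iff hA]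
  constructor
  · rintro ⟨hxT, hxℓ⟩
    obtain ⟨d, hd, hy⟩ := (mem_tile_iff hA).1 hxT
    obtain ⟨d', hd', hz⟩ := (mem_vadd_tile_iff hA).1 hxℓ
    have hmem : toEuclideanCLM (𝕜 := ℝ) (matR A) x ∈
        (d : ℝ) • vecE v +ᵥ (T ∩ (vecE (A *ᵥ ℓ - (d - d') • v) +ᵥ T)) := by
      rw [vadd_set_inter, vadd_vadd, key, sub_sub_cancel]
      exact ⟨hy, hz⟩
    have hb := hd.isDiffDigit_sub hd'
    exact ⟨_, sub_ne_zero.2 (mulVec_ne_smul_of_isZBasis hchar hq0 hbasis hℓ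
      (Int.lt_of_le_sub_one hb)), vadd_set_nonempty.1 ⟨_, hmem⟩, d - d', hb, rfl, d,
      hd.memI_sub hd', hmem⟩
  · rintro ⟨_, -, -, b, -, rfl, j, hj, hmem⟩
    rw [vadd_set_inter, vadd_vadd, key] at hmem
    exact ⟨(mem_tile_iff hA).2 ⟨j, hj.isDigit, hmem.1⟩,
      (mem_vadd_tile_iff hA).2 ⟨j - b, hj.isDigit_sub, hmem.2⟩⟩

/-- Proposition 3.1. For a neighbor translate `ℓ`,
`T_ℓ = ⋃_{ℓ'' ∈ B_ℓ} ⋃_{j ∈ I_b} A⁻¹(T_{ℓ''} + jv)`, where `B_ℓ` consists of the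
neighbor translates `ℓ'' = Aℓ - bv` with `b ∈ ΔD`, and `T_m = T ∩ (T + m)`; hence the
boundary `∂T = ⋃_ℓ T_ℓ` is a graph-directed set. -/
theorem piece_decomposition
    (A : Matrix (Fin 2) (Fin 2) ℤ) (p q : ℤ) (v : Fin 2 → ℤ)
    (hq : 2 ≤ |q|)
    (hchar : A.charpoly = X ^ 2 + C p * X + C q)
    (hexp : Expanding A)
    (hbasis : IsZBasis A v)
    (hdisk : DiskLike (Tile A q v))
    (ℓ : Fin 2 → ℤ) (hℓ : ℓ ≠ 0)
    (hnb : (Tile A q v ∩ (vecE ℓ +ᵥ Tile A q v)).Nonempty) :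
    Tile A q v ∩ (vecE ℓ +ᵥ Tile A q v) =
      ⋃ (ℓ'' : Fin 2 → ℤ) (_ : ℓ'' ≠ 0)
        (_ : (Tile A q v ∩ (vecE ℓ'' +ᵥ Tile A q v)).Nonempty)
        (b : ℤ) (_ : IsDiffDigit q b) (_ : ℓ'' = A.mulVec ℓ - b • v)
        (j : ℤ) (_ : MemI q b j),
        (fun x : E2 => toE ((matR A)⁻¹.mulVec x)) ''
          (((j : ℝ) • vecE v) +ᵥ (Tile A q v ∩ (vecE ℓ'' +ᵥ Tile A q v))) :=
  piece_decomposition_general A p q v hq hchar hbasis ℓ hℓ
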